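/- arXiv:1107.1063 — 2 statements merged into one kernel-verified Lean document; each statement's English description precedes it below -/
import Mathlib

section
/- For all integers n and r with 0 ≤ r ≤ n−1, one has T(n,r) = U(n,r). -/
/-!
Both sides vanish at `n = 0` and grow by `C(n,r)·2^(n-r)` from `n` to `n + 1`. For `U` this is
its last summand; for `T`, Pascal's rule turns the increment into `∑ₖ C(n,k)·C(k,r)`, which counts
pairs `R ⊆ K ⊆ [n]` with `|R| = r` and so equals `C(n,r)·2^(n-r)`.
-/

open Finset

/-- `T n r = ∑_{j=r+1}^{n} C(n,j)·C(j−1,r)`. -/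
def T (n r : ℕ) : ℕ := ∑ j ∈ Icc (r + 1) n, n.choose j * (j - 1).choose r

/-- `U n r = ∑_{j=r+1}^{n} C(j−1,r)·2^{j−1−r}`. -/
def U (n r : ℕ) : ℕ := ∑ j ∈ Icc (r + 1) n, (j - 1).choose r * 2 ^ (j - 1 - r)

theorem Nat.sum_range_choose_mul_choose (n r : ℕ) :
    ∑ k ∈ range (n + 1), n.choose k * k.choose r = n.choose r * 2 ^ (n - r) := by
  have hlow : ∀ m : ℕ, ∑ k ∈ range r, m.choose k * k.choose r = 0 := fun m =>
    sum_eq_zero fun k hk => by rw [Nat.choose_eq_zero_of_lt (mem_range.1 hk), mul_zero]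
  rcases lt_or_ge n r with hnr | hrn
  · rw [Nat.choose_eq_zero_of_lt hnr, zero_mul, ← hlow n]
    exact sum_subset (range_subset_range.2 hnr) fun k _ hk => by
      rw [Nat.choose_eq_zero_of_lt (by simpa using hk), zero_mul]
  obtain ⟨m, rfl⟩ := exists_add_of_le hrn
  rw [add_assoc, sum_range_add, hlow, zero_add, add_tsub_cancel_left, ← Nat.sum_range_choose,
    mul_sum]
  refine sum_congr rfl fun i _ => ?_
  rw [Nat.choose_mul (le_add_right _ _), add_tsub_cancel_left, add_tsub_cancel_left]

theorem Finset.sum_Icc_succ_eq_sum_range {M : Type*} [AddCommMonoid M] {r : ℕ} (n : ℕ)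
    (f : ℕ → M) (hf : ∀ i < r, f (i + 1) = 0) :
    ∑ j ∈ Icc (r + 1) n, f j = ∑ i ∈ range n, f (i + 1) := by
  calc ∑ j ∈ Icc (r + 1) n, f j = ∑ j ∈ Ico 1 (n + 1), f j := by
        refine sum_subset (fun j hj => by simp only [mem_Icc, mem_Ico] at hj ⊢; omega)
          fun j hj hj' => ?_
        obtain ⟨i, rfl⟩ : ∃ i, j = i + 1 := ⟨j - 1, by simp only [mem_Ico] at hj; omega⟩
        exact hf i (by simp only [mem_Icc, mem_Ico] at hj hj'; omega)
    _ = ∑ i ∈ range n, f (i + 1) := by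
        rw [sum_Ico_eq_sum_range, add_tsub_cancel_right]
        simp only [add_comm 1]

theorem T_eq_sum_range (n r : ℕ) : T n r = ∑ i ∈ range n, n.choose (i + 1) * i.choose r := by
  rw [T, sum_Icc_succ_eq_sum_range n _ fun i hi => by
    rw [add_tsub_cancel_right, Nat.choose_eq_zero_of_lt hi, mul_zero]]
  simp only [add_tsub_cancel_right]

theorem U_eq_sum_range (n r : ℕ) : U n r = ∑ i ∈ range n, i.choose r * 2 ^ (i - r) := by
  rw [U, sum_Icc_succ_eq_sum_range n _ fun i hi => by
    rw [add_tsub_cancel_right, Nat.choose_eq_zero_of_lt hi, zero_mul]]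
  simp only [add_tsub_cancel_right]

theorem T_succ (n r : ℕ) : T (n + 1) r = T n r + n.choose r * 2 ^ (n - r) := by
  simp only [T_eq_sum_range, Nat.choose_succ_succ', add_mul, sum_add_distrib,
    Nat.sum_range_choose_mul_choose]
  rw [sum_range_succ _ n, Nat.choose_succ_self, zero_mul, add_zero, add_comm]

theorem U_succ (n r : ℕ) : U (n + 1) r = U n r + n.choose r * 2 ^ (n - r) := by
  rw [U_eq_sum_range, U_eq_sum_range, sum_range_succ]

theorem T_eq_U_general (n r : ℕ) : T n r = U n r := by
  induction n with
  | zero => simp [T, U]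
  | succ n ih => rw [T_succ, U_succ, ih]

theorem T_eq_U (n r : ℕ) (h : r + 1 ≤ n) : T n r = U n r :=
  T_eq_U_general n r
end

section
/- For every fixed integer r ≥ 0, the following identity of formal power series over the integers holds: (1 − X)·(1 − 2X)^{r+1} · Σ_{m≥0} S(m,r)·X^m = X^{2r+2}; equivalently, for fixed r the generating function of the sequence (S(m,r))_{m≥0} is x^{2r+2}/((1−x)(1−2x)^{r+1}). -/
open Finset PowerSeries

/-- `S n r = ∑_{i=r+1}^{⌊n/2⌋} C(n,2i)·C(i−1,r)`. -/
def S (n r : ℕ) : ℕ := ∑ i ∈ Icc (r + 1) (n / 2), n.choose (2 * i) * (i - 1).choose r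

/-!
Pascal's rule applied twice gives `C(n+2,k+2) + C(n,k+2) = 2·C(n+1,k+2) + C(n,k)`. Summed against
the weights `C(j,r+1)` (resp. `1`), and with `∑ⱼ C(n,2j)·C(j,r+1)` rewritten as
`S(n,r) + S(n,r+1)` by shifting `j` and using Pascal's rule on `C(j+1,r+1)`, this yields
`S(n+2,r+1) = 2·S(n+1,r+1) + S(n,r)` and `S(n+2,0) = 2·S(n+1,0) + 1`. For the generating
functions `G_r` this says `(1 - 2X)·G_{r+1} = X²·G_r` and `(1 - 2X)·G_0 = X²/(1 - X)`,
and the theorem follows by induction on `r`.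
-/

lemma choose_add_two_add_choose (n k : ℕ) :
    (n + 2).choose (k + 2) + n.choose (k + 2) = 2 * (n + 1).choose (k + 2) + n.choose k := by
  rw [Nat.choose_succ_succ' (n + 1) (k + 1), Nat.choose_succ_succ' n k,
    Nat.choose_succ_succ' n (k + 1)]
  ring

lemma sum_range_choose_mul_eq_of_le (w : ℕ → ℕ) {n N M : ℕ} (hN : n < 2 * N + 2) (hNM : N ≤ M) :
    ∑ j ∈ range M, n.choose (2 * j + 2) * w j = ∑ j ∈ range N, n.choose (2 * j + 2) * w j := by
  refine (sum_subset (range_subset_range.2 hNM) fun j _ hj => ?_).symm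
  rw [Nat.choose_eq_zero_of_lt (by simp at hj; omega), zero_mul]

lemma S_eq_sum_range (r : ℕ) {n N : ℕ} (hN : n < 2 * N + 2) :
    S n r = ∑ j ∈ range N, n.choose (2 * j + 2) * j.choose r := by
  have hlow : S n r = ∑ i ∈ Icc 1 (n / 2), n.choose (2 * i) * (i - 1).choose r := by
    refine sum_subset (Icc_subset_Icc_left (by omega)) fun i hi hi' => ?_
    simp only [mem_Icc] at hi hi'
    rw [Nat.choose_eq_zero_of_lt (by omega : i - 1 < r), mul_zero]
  have hshift : ∑ i ∈ Icc 1 (n / 2), n.choose (2 * i) * (i - 1).choose r =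
      ∑ j ∈ range (n / 2), n.choose (2 * j + 2) * j.choose r := by
    rw [← Ico_add_one_right_eq_Icc, sum_Ico_eq_sum_range, Nat.add_sub_cancel]
    exact sum_congr rfl fun j _ => by rw [Nat.add_sub_cancel_left, add_comm 1, mul_add_one]
  rw [hlow, hshift]
  exact (sum_range_choose_mul_eq_of_le (·.choose r) (by omega) (le_max_left _ N)).symm.trans
    (sum_range_choose_mul_eq_of_le _ hN (le_max_right _ _))

lemma sum_range_choose_add_two_mul (w : ℕ → ℕ) (n N : ℕ) :
    ∑ j ∈ range N, (n + 2).choose (2 * j + 2) * w j + ∑ j ∈ range N, n.choose (2 * j + 2) * w j =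
      2 * ∑ j ∈ range N, (n + 1).choose (2 * j + 2) * w j +
        ∑ j ∈ range N, n.choose (2 * j) * w j := by
  simp only [← sum_add_distrib, mul_sum, ← mul_assoc, ← add_mul, choose_add_two_add_choose]

lemma sum_range_succ_choose_two_mul (w : ℕ → ℕ) (n N : ℕ) :
    ∑ j ∈ range (N + 1), n.choose (2 * j) * w j =
      w 0 + ∑ j ∈ range N, n.choose (2 * j + 2) * w (j + 1) := by
  rw [sum_range_succ', add_comm]
  simp [mul_add]

lemma S_add_two_succ (n r : ℕ) : S (n + 2) (r + 1) = 2 * S (n + 1) (r + 1) + S n r := by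
  have key := sum_range_choose_add_two_mul (·.choose (r + 1)) n (n + 1 + 1)
  have pascal : ∀ j, (j + 1).choose (r + 1) = j.choose r + j.choose (r + 1) :=
    fun j => Nat.choose_succ_succ' j r
  rw [sum_range_succ_choose_two_mul] at key
  simp only [pascal, Nat.choose_zero_succ, mul_add, sum_add_distrib, zero_add] at key
  rw [← S_eq_sum_range _ (by omega : n + 2 < 2 * (n + 1 + 1) + 2),
    ← S_eq_sum_range _ (by omega : n + 1 < 2 * (n + 1 + 1) + 2),
    ← S_eq_sum_range _ (by omega : n < 2 * (n + 1 + 1) + 2),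
    ← S_eq_sum_range _ (by omega : n < 2 * (n + 1) + 2),
    ← S_eq_sum_range _ (by omega : n < 2 * (n + 1) + 2)] at key
  omega

lemma S_add_two_zero (n : ℕ) : S (n + 2) 0 = 2 * S (n + 1) 0 + 1 := by
  have key := sum_range_choose_add_two_mul (·.choose 0) n (n + 1 + 1)
  have hone : ∀ j, (j + 1).choose 0 = j.choose 0 := by simp
  rw [sum_range_succ_choose_two_mul] at key
  simp only [hone, Nat.choose_self] at key
  rw [← S_eq_sum_range _ (by omega : n + 2 < 2 * (n + 1 + 1) + 2),
    ← S_eq_sum_range _ (by omega : n + 1 < 2 * (n + 1 + 1) + 2),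
    ← S_eq_sum_range _ (by omega : n < 2 * (n + 1 + 1) + 2),
    ← S_eq_sum_range _ (by omega : n < 2 * (n + 1) + 2)] at key
  omega

lemma S_zero_left (r : ℕ) : S 0 r = 0 := by simp [S]

lemma S_one_left (r : ℕ) : S 1 r = 0 := by simp [S]

lemma one_sub_two_X_mul_mk {R : Type*} [CommRing R] {f g : ℕ → R} (h0 : f 0 = 0) (h1 : f 1 = 0)
    (h : ∀ n, f (n + 2) = 2 * f (n + 1) + g n) :
    (1 - 2 * X) * PowerSeries.mk f = X ^ 2 * PowerSeries.mk g := by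
  ext (_ | _ | n)
  · simp [h0]
  · simp [sub_mul, two_mul, add_mul, h0, h1, coeff_X_pow_mul']
  · simp [sub_mul, two_mul, add_mul, h, coeff_X_pow_mul']

lemma one_sub_two_X_mul_mk_S_succ (r : ℕ) :
    (1 - 2 * X) * PowerSeries.mk (fun m => (S m (r + 1) : ℤ)) =
      X ^ 2 * PowerSeries.mk (fun m => (S m r : ℤ)) :=
  one_sub_two_X_mul_mk (by simp [S_zero_left]) (by simp [S_one_left])
    fun n => by simp [S_add_two_succ]

lemma one_sub_X_mul_one_sub_two_X_mul_mk_S_zero :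
    (1 - X) * (1 - 2 * X) * PowerSeries.mk (fun m => (S m 0 : ℤ)) = X ^ 2 := by
  have h := one_sub_two_X_mul_mk (g := 1) (f := fun m => (S m 0 : ℤ)) (by simp [S_zero_left])
    (by simp [S_one_left]) fun n => by simp [S_add_two_zero]
  rw [mul_assoc, h, mul_left_comm, mul_comm (1 - X), mk_one_mul_one_sub_eq_one, mul_one]

theorem genFun (r : ℕ) :
    (1 - X) * (1 - 2 * X) ^ (r + 1) *
        PowerSeries.mk (fun m => (S m r : ℤ)) = X ^ (2 * r + 2) := by
  induction r with
  | zero => simpa using one_sub_X_mul_one_sub_two_X_mul_mk_S_zero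
  | succ r ih =>
    calc (1 - X) * (1 - 2 * X) ^ (r + 1 + 1) * PowerSeries.mk (fun m => (S m (r + 1) : ℤ))
        = (1 - X) * (1 - 2 * X) ^ (r + 1) *
            ((1 - 2 * X) * PowerSeries.mk (fun m => (S m (r + 1) : ℤ))) := by ring
      _ = X ^ (2 * r + 2) * X ^ 2 := by rw [one_sub_two_X_mul_mk_S_succ, ← ih]; ring
      _ = X ^ (2 * (r + 1) + 2) := by ring
end
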